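/- arXiv:2004.06439 — 2 statements merged into one kernel-verified Lean document; each statement's English description precedes it below -/
import Mathlib

section
/- With the same setup as the matrix composition (C = B̃ ∘ (⊗_{i=1}^N Â_i) for symmetric B and matrices A_1,…,A_N), the largest eigenvalue satisfies λ_max(C) ≥ λ_max(B) · ∏_{i=1}^N ‖A_i‖, and the spectral norm satisfies ‖C‖ ≥ ‖B‖ · ∏_{i=1}^N ‖A_i‖. -/
open Matrix

/-- The spectral norm (largest singular value) of a real matrix. -/
noncomputable def matrixSpectralNorm {m n : Type*} [Fintype m] [Fintype n] [DecidableEq n]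
    (A : Matrix m n ℝ) : ℝ :=
  ‖LinearMap.toContinuousLinearMap (Matrix.toEuclideanLin A)‖

/-- The largest eigenvalue of a real symmetric matrix, characterized as the supremum of the
Rayleigh quotient `vᵀ A v` over unit vectors `v`. -/
noncomputable def lamMax {n : Type*} [Fintype n] (A : Matrix n n ℝ) : ℝ :=
  sSup {x : ℝ | ∃ v : n → ℝ, (∑ i, v i ^ 2 = 1) ∧ x = v ⬝ᵥ A.mulVec v}

/-- `hatMatrix A = [[‖A‖·I, A], [Aᵀ, ‖A‖·I]]`. -/
noncomputable def hatMatrix {m n : ℕ} (A : Matrix (Fin m) (Fin n) ℝ) :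
    Matrix (Fin m ⊕ Fin n) (Fin m ⊕ Fin n) ℝ :=
  Matrix.fromBlocks (matrixSpectralNorm A • (1 : Matrix (Fin m) (Fin m) ℝ)) A
    Aᵀ (matrixSpectralNorm A • (1 : Matrix (Fin n) (Fin n) ℝ))

/-- The matrix composition `C = B̃ ∘ (Â_1 ⊗ ⋯ ⊗ Â_N)`. -/
noncomputable def matrixComposition {N : ℕ} {m n : Fin N → ℕ}
    (B : Matrix (Fin N → Bool) (Fin N → Bool) ℝ)
    (A : ∀ i, Matrix (Fin (m i)) (Fin (n i)) ℝ) :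
    Matrix (∀ i, Fin (m i) ⊕ Fin (n i)) (∀ i, Fin (m i) ⊕ Fin (n i)) ℝ :=
  Matrix.of fun a b =>
    B (fun i => (a i).isRight) (fun i => (b i).isRight) * ∏ i, hatMatrix (A i) (a i) (b i)

/-!
Take unit top singular vectors `uᵢ, vᵢ` of `Aᵢ` (so `uᵢᵀ Aᵢ vᵢ = ‖Aᵢ‖`) and put `ζᵢ = uᵢ ⊕ vᵢ`.
For a unit vector `w` on `{0,1}^N`, the vector `x a = w ã · ∏ᵢ ζᵢ (aᵢ)` is again a unit vector,
and since every block of `Âᵢ` has `ζᵢ`-bilinear form exactly `‖Aᵢ‖`, the quadratic form factors: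
`xᵀ C x = (∏ᵢ ‖Aᵢ‖) · wᵀ B w`. So the Rayleigh quotients of `C` contain those of `B` scaled by
`∏ᵢ ‖Aᵢ‖`; this bounds `λ_max(C)` at once, and `‖C‖` because `‖B‖` is the supremum of
`|Rayleigh quotient|` for symmetric `B`. If some `Aᵢ` has no rows or no columns, `∏ᵢ ‖Aᵢ‖ = 0`
and `C` has zero diagonal, so `λ_max(C) ≥ 0`.
-/

open Finset Pointwise

theorem Fintype.sum_filter_isRight_eq {α β R : Type*} [Fintype α] [Fintype β] [AddCommMonoid R]
    (f : α ⊕ β → R) (b : Bool) :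
    ∑ y with y.isRight = b, f y = bif b then ∑ j, f (.inr j) else ∑ i, f (.inl i) := by
  cases b <;> simp [Fintype.sum_sum_type, sum_filter]

theorem exists_unit_inner_eq_norm {E : Type*} [NormedAddCommGroup E] [InnerProductSpace ℝ E]
    [Nontrivial E] (y : E) : ∃ u : E, ‖u‖ = 1 ∧ inner ℝ u y = ‖y‖ := by
  rcases eq_or_ne y 0 with rfl | hy
  · simpa using exists_norm_eq E zero_le_one
  · refine ⟨‖y‖⁻¹ • y, by simp [norm_smul, hy], ?_⟩
    rw [real_inner_smul_left, real_inner_self_eq_norm_sq]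
    field_simp

section Pattern

variable {R ι : Type*} [CommSemiring R] [Fintype ι] [DecidableEq ι] {κ β : ι → Type*}
  [∀ i, Fintype (κ i)] [∀ i, Fintype (β i)] [∀ i, DecidableEq (β i)]

theorem Finset.sum_mul_prod_eq_sum_mul_prod_fiberwise (p : ∀ i, κ i → β i) (G : (∀ i, β i) → R)
    (h : ∀ i, κ i → R) :
    ∑ a : ∀ i, κ i, G (fun i ↦ p i (a i)) * ∏ i, h i (a i) =
      ∑ s : ∀ i, β i, G s * ∏ i, ∑ y with p i y = s i, h i y := by
  have hfiber (s : ∀ i, β i) : ∏ i, ∑ y with p i y = s i, h i y =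
      ∑ a : ∀ i, κ i with (fun i ↦ p i (a i)) = s, ∏ i, h i (a i) := by
    rw [prod_univ_sum]
    congr 1
    ext a; simp [funext_iff]
  simp_rw [hfiber, mul_sum]
  rw [← sum_fiberwise univ (fun a i ↦ p i (a i))]
  refine sum_congr rfl fun s _ ↦ sum_congr rfl fun a ha ↦ ?_
  rw [(mem_filter.1 ha).2]

variable (p : ∀ i, κ i → β i)

/-- `B̃ ∘ (⨂ᵢ Kᵢ)`, where `B̃ a b = B (p ∘ a) (p ∘ b)`. -/
def patternProduct (B : Matrix (∀ i, β i) (∀ i, β i) R) (K : ∀ i, Matrix (κ i) (κ i) R) :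
    Matrix (∀ i, κ i) (∀ i, κ i) R :=
  of fun a b ↦ B (fun i ↦ p i (a i)) (fun i ↦ p i (b i)) * ∏ i, K i (a i) (b i)

def patternVec (w : (∀ i, β i) → R) (ζ : ∀ i, κ i → R) : (∀ i, κ i) → R :=
  fun a ↦ w (fun i ↦ p i (a i)) * ∏ i, ζ i (a i)

theorem sum_patternVec_sq (w : (∀ i, β i) → R) (ζ : ∀ i, κ i → R) :
    ∑ a, patternVec p w ζ a ^ 2 = ∑ s, w s ^ 2 * ∏ i, ∑ y with p i y = s i, ζ i y ^ 2 := by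
  simp_rw [patternVec, mul_pow, ← prod_pow]
  exact sum_mul_prod_eq_sum_mul_prod_fiberwise p (w · ^ 2) (fun i y ↦ ζ i y ^ 2)

theorem dotProduct_patternProduct_mulVec_patternVec (B : Matrix (∀ i, β i) (∀ i, β i) R)
    (K : ∀ i, Matrix (κ i) (κ i) R) (w : (∀ i, β i) → R) (ζ : ∀ i, κ i → R) :
    patternVec p w ζ ⬝ᵥ patternProduct p B K *ᵥ patternVec p w ζ =
      ∑ s, ∑ t, w s * B s t * w t *
        ∏ i, ∑ y with p i y = s i, ∑ z with p i z = t i, ζ i y * K i y z * ζ i z := by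
  set x := patternVec p w ζ
  let Kζ (i : ι) (y : κ i) (τ : β i) : R := ∑ z with p i z = τ, K i y z * ζ i z
  have hmulVec (a : ∀ i, κ i) : (patternProduct p B K *ᵥ x) a =
      ∑ t, B (fun i ↦ p i (a i)) t * w t * ∏ i, Kζ i (a i) (t i) := by
    rw [← sum_mul_prod_eq_sum_mul_prod_fiberwise p (fun t ↦ B (fun i ↦ p i (a i)) t * w t)
      (fun i z ↦ K i (a i) z * ζ i z)]
    simp only [mulVec, dotProduct, patternProduct, of_apply, x, patternVec, prod_mul_distrib]
    exact sum_congr rfl fun b _ ↦ by ring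
  calc x ⬝ᵥ patternProduct p B K *ᵥ x
      = ∑ t, ∑ a : ∀ i, κ i, w (fun i ↦ p i (a i)) * B (fun i ↦ p i (a i)) t * w t *
          ∏ i, (ζ i (a i) * Kζ i (a i) (t i)) := by
        simp only [dotProduct, hmulVec, mul_sum, x, patternVec, prod_mul_distrib]
        rw [sum_comm]
        exact sum_congr rfl fun t _ ↦ sum_congr rfl fun a _ ↦ by ring
    _ = ∑ t, ∑ s, w s * B s t * w t * ∏ i, ∑ y with p i y = s i, ζ i y * Kζ i y (t i) :=
        sum_congr rfl fun t _ ↦ sum_mul_prod_eq_sum_mul_prod_fiberwise p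
          (fun s ↦ w s * B s t * w t) (fun i y ↦ ζ i y * Kζ i y (t i))
    _ = _ := by
        rw [sum_comm]
        simp only [Kζ, mul_sum, mul_assoc]

end Pattern

section Rayleigh

variable {ι κ : Type*} [Fintype ι] [Fintype κ] [DecidableEq κ]

theorem matrixSpectralNorm_nonneg (A : Matrix ι κ ℝ) : 0 ≤ matrixSpectralNorm A :=
  norm_nonneg _

theorem norm_toLp_eq_one_iff (v : ι → ℝ) : ‖WithLp.toLp 2 v‖ = 1 ↔ ∑ i, v i ^ 2 = 1 := by
  simp [EuclideanSpace.norm_eq]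

theorem inner_toLp_toEuclideanLin_toLp (A : Matrix ι κ ℝ) (u : ι → ℝ) (v : κ → ℝ) :
    inner ℝ (WithLp.toLp 2 u) (toEuclideanLin A (WithLp.toLp 2 v)) = u ⬝ᵥ A *ᵥ v := by
  change inner ℝ (WithLp.toLp 2 u) (WithLp.toLp 2 (A *ᵥ v)) = _
  simp [EuclideanSpace.inner_toLp_toLp, dotProduct_comm]

theorem exists_dotProduct_mulVec_eq_matrixSpectralNorm [Nonempty ι] [Nonempty κ]
    (A : Matrix ι κ ℝ) :
    ∃ u v, ∑ i, u i ^ 2 = 1 ∧ ∑ j, v j ^ 2 = 1 ∧ u ⬝ᵥ A *ᵥ v = matrixSpectralNorm A := by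
  set T := LinearMap.toContinuousLinearMap (toEuclideanLin A)
  obtain ⟨x, hx, hTx⟩ := ((isCompact_sphere (0 : EuclideanSpace ℝ κ) 1).image
    (continuous_norm.comp T.continuous)).sSup_mem
      ((NormedSpace.sphere_nonempty.2 zero_le_one).image _)
  rw [Function.comp_def, T.sSup_sphere_eq_norm] at hTx
  obtain ⟨u, hu, huTx⟩ := exists_unit_inner_eq_norm (T x)
  refine ⟨WithLp.ofLp u, WithLp.ofLp x, (norm_toLp_eq_one_iff _).1 hu,
    (norm_toLp_eq_one_iff _).1 (by simpa using hx), ?_⟩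
  rw [← inner_toLp_toEuclideanLin_toLp]
  exact huTx.trans hTx

theorem matrixSpectralNorm_eq_zero_of_isEmpty (A : Matrix ι κ ℝ) (h : IsEmpty ι ∨ IsEmpty κ) :
    matrixSpectralNorm A = 0 := by
  obtain rfl : A = 0 := by
    ext i j
    exact h.elim (fun h ↦ h.elim i) (fun h ↦ h.elim j)
  simp [matrixSpectralNorm]

def rayleighSet (M : Matrix ι ι ℝ) : Set ℝ :=
  {x | ∃ v : ι → ℝ, (∑ i, v i ^ 2 = 1) ∧ x = v ⬝ᵥ M *ᵥ v}

theorem lamMax_eq_sSup_rayleighSet (M : Matrix ι ι ℝ) : lamMax M = sSup (rayleighSet M) := rfl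

variable [DecidableEq ι]

theorem diag_mem_rayleighSet (M : Matrix ι ι ℝ) (a : ι) : M a a ∈ rayleighSet M :=
  ⟨Pi.single a 1, by simp [sq, Pi.single_apply], by simp⟩

theorem rayleighQuotient_toLp (M : Matrix ι ι ℝ) {v : ι → ℝ} (hv : ∑ i, v i ^ 2 = 1) :
    (LinearMap.toContinuousLinearMap (toEuclideanLin M)).rayleighQuotient (WithLp.toLp 2 v) =
      v ⬝ᵥ M *ᵥ v := by
  rw [ContinuousLinearMap.rayleighQuotient, (norm_toLp_eq_one_iff v).2 hv,
    ContinuousLinearMap.reApplyInnerSelf_apply, real_inner_comm]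
  simpa using inner_toLp_toEuclideanLin_toLp M v v

theorem abs_le_matrixSpectralNorm_of_mem_rayleighSet {M : Matrix ι ι ℝ} {x : ℝ}
    (hx : x ∈ rayleighSet M) : |x| ≤ matrixSpectralNorm M := by
  obtain ⟨v, hv, rfl⟩ := hx
  rw [← rayleighQuotient_toLp M hv]
  exact ContinuousLinearMap.rayleighQuotient_le_norm _ _

theorem bddAbove_rayleighSet (M : Matrix ι ι ℝ) : BddAbove (rayleighSet M) :=
  ⟨matrixSpectralNorm M, fun _ hx ↦ (abs_le.1 (abs_le_matrixSpectralNorm_of_mem_rayleighSet hx)).2⟩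

theorem rayleighQuotient_mem_rayleighSet (M : Matrix ι ι ℝ) {y : EuclideanSpace ℝ ι}
    (hy : y ≠ 0) :
    (LinearMap.toContinuousLinearMap (toEuclideanLin M)).rayleighQuotient y ∈ rayleighSet M := by
  have hunit : ‖‖y‖⁻¹ • y‖ = 1 := by simp [norm_smul, hy]
  have hv := (norm_toLp_eq_one_iff (WithLp.ofLp (‖y‖⁻¹ • y))).1 hunit
  refine ⟨_, hv, ?_⟩
  rw [← rayleighQuotient_toLp M hv, WithLp.toLp_ofLp,
    ContinuousLinearMap.rayleigh_smul _ _ (by simpa using hy)]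

theorem lamMax_mul_le_of_smul_subset [Nonempty ι] {M : Matrix ι ι ℝ} {M' : Matrix κ κ ℝ} {c : ℝ}
    (hc : 0 ≤ c) (h : c • rayleighSet M ⊆ rayleighSet M') : lamMax M * c ≤ lamMax M' := by
  rw [lamMax_eq_sSup_rayleighSet, lamMax_eq_sSup_rayleighSet, mul_comm, ← smul_eq_mul,
    ← Real.sSup_smul_of_nonneg hc]
  exact csSup_le_csSup (bddAbove_rayleighSet M')
    (Set.nonempty_of_mem (diag_mem_rayleighSet M (Classical.arbitrary ι))).smul_set h

theorem matrixSpectralNorm_mul_le_of_smul_subset {M : Matrix ι ι ℝ} (hM : M.IsSymm)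
    {M' : Matrix κ κ ℝ} {c : ℝ} (hc : 0 ≤ c) (h : c • rayleighSet M ⊆ rayleighSet M') :
    matrixSpectralNorm M * c ≤ matrixSpectralNorm M' := by
  rw [matrixSpectralNorm, ContinuousLinearMap.norm_eq_iSup_rayleighQuotient _
    (isSymmetric_toEuclideanLin_iff.2 (isHermitian_iff_isSymm.2 hM)),
    Real.iSup_mul_of_nonneg hc]
  refine ciSup_le fun y ↦ ?_
  rcases eq_or_ne y 0 with rfl | hy
  · simpa using matrixSpectralNorm_nonneg M'
  · rw [← abs_of_nonneg hc, ← abs_mul, mul_comm]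
    exact abs_le_matrixSpectralNorm_of_mem_rayleighSet
      (h (Set.smul_mem_smul_set (rayleighQuotient_mem_rayleighSet M hy)))

theorem lamMax_nonneg_of_forall_diag_nonneg {M : Matrix ι ι ℝ} (h : ∀ a, 0 ≤ M a a) :
    0 ≤ lamMax M := by
  rcases isEmpty_or_nonempty ι with hι | ⟨⟨a⟩⟩
  · have : rayleighSet M = ∅ :=
      Set.eq_empty_of_forall_notMem (by rintro _ ⟨v, hv, -⟩; simp at hv)
    rw [lamMax_eq_sSup_rayleighSet, this, Real.sSup_empty]
  · exact (h a).trans (le_csSup (bddAbove_rayleighSet M) (diag_mem_rayleighSet M a))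

end Rayleigh

section HatMatrix

variable {m n : ℕ} (A : Matrix (Fin m) (Fin n) ℝ)

theorem hatMatrix_apply_self (y : Fin m ⊕ Fin n) : hatMatrix A y y = matrixSpectralNorm A := by
  cases y <;> simp [hatMatrix]

theorem sum_filter_isRight_sumElim_sq {u : Fin m → ℝ} {v : Fin n → ℝ} (hu : ∑ j, u j ^ 2 = 1)
    (hv : ∑ k, v k ^ 2 = 1) (s : Bool) : ∑ y with y.isRight = s, Sum.elim u v y ^ 2 = 1 := by
  rw [Fintype.sum_filter_isRight_eq]
  cases s <;> simpa

theorem sum_filter_isRight_sumElim_hatMatrix {u : Fin m → ℝ} {v : Fin n → ℝ}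
    (hu : ∑ j, u j ^ 2 = 1) (hv : ∑ k, v k ^ 2 = 1) (huv : u ⬝ᵥ A *ᵥ v = matrixSpectralNorm A)
    (s t : Bool) :
    ∑ y with y.isRight = s, ∑ z with z.isRight = t,
      Sum.elim u v y * hatMatrix A y z * Sum.elim u v z = matrixSpectralNorm A := by
  simp only [Fintype.sum_filter_isRight_eq]
  cases s <;> cases t <;> simp only [hatMatrix, Sum.elim_inl, Sum.elim_inr,
    fromBlocks_apply₁₁, fromBlocks_apply₁₂, fromBlocks_apply₂₁, fromBlocks_apply₂₂, cond_false,
    cond_true, Matrix.smul_apply, one_apply, transpose_apply, smul_eq_mul, mul_ite, mul_one,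
    mul_zero, ite_mul, zero_mul, sum_ite_eq, mem_univ, ↓reduceIte]
  · simp only [mul_comm (u _), mul_assoc, ← mul_sum, ← sq, hu, mul_one]
  · simp [← huv, dotProduct, mulVec, mul_sum, mul_assoc]
  · rw [sum_comm, ← huv]
    simp only [dotProduct, mulVec, mul_sum]
    exact sum_congr rfl fun _ _ ↦ sum_congr rfl fun _ _ ↦ by ring
  · simp only [mul_comm (v _), mul_assoc, ← mul_sum, ← sq, hv, mul_one]

end HatMatrix

section Composition

variable {N : ℕ} {m n : Fin N → ℕ} (B : Matrix (Fin N → Bool) (Fin N → Bool) ℝ)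
  (A : ∀ i, Matrix (Fin (m i)) (Fin (n i)) ℝ)

theorem matrixComposition_apply_self (a : ∀ i, Fin (m i) ⊕ Fin (n i)) :
    matrixComposition B A a a =
      B (fun i ↦ (a i).isRight) (fun i ↦ (a i).isRight) * ∏ i, matrixSpectralNorm (A i) := by
  simp [matrixComposition, hatMatrix_apply_self]

theorem matrixComposition_eq_patternProduct :
    matrixComposition B A = patternProduct (fun _ ↦ Sum.isRight) B (fun i ↦ hatMatrix (A i)) :=
  rfl

theorem smul_rayleighSet_subset_rayleighSet_matrixComposition [∀ i, Nonempty (Fin (m i))]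
    [∀ i, Nonempty (Fin (n i))] :
    (∏ i, matrixSpectralNorm (A i)) • rayleighSet B ⊆ rayleighSet (matrixComposition B A) := by
  choose u v hu hv huv using fun i ↦ exists_dotProduct_mulVec_eq_matrixSpectralNorm (A i)
  rintro _ ⟨_, ⟨w, hw, rfl⟩, rfl⟩
  refine ⟨patternVec (fun _ ↦ Sum.isRight) w (fun i ↦ Sum.elim (u i) (v i)), ?_, ?_⟩
  · simpa [sum_patternVec_sq, sum_filter_isRight_sumElim_sq (hu _) (hv _)] using hw
  · rw [matrixComposition_eq_patternProduct, dotProduct_patternProduct_mulVec_patternVec]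
    simp only [sum_filter_isRight_sumElim_hatMatrix _ (hu _) (hv _) (huv _), smul_eq_mul,
      dotProduct, mulVec, mul_sum]
    exact sum_congr rfl fun _ _ ↦ sum_congr rfl fun _ _ ↦ by ring

end Composition

/-- For the matrix composition `C` of a symmetric matrix `B` with `A_1, …, A_N`:
`λ_max(C) ≥ λ_max(B) · ∏ i ‖A_i‖` and `‖C‖ ≥ ‖B‖ · ∏ i ‖A_i‖`. -/
theorem stmt8 {N : ℕ} {m n : Fin N → ℕ}
    (B : Matrix (Fin N → Bool) (Fin N → Bool) ℝ) (hB : B.IsSymm)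
    (A : ∀ i, Matrix (Fin (m i)) (Fin (n i)) ℝ) :
    lamMax (matrixComposition B A) ≥ lamMax B * ∏ i, matrixSpectralNorm (A i) ∧
    matrixSpectralNorm (matrixComposition B A) ≥ matrixSpectralNorm B * ∏ i, matrixSpectralNorm (A i) := by
  have hP : 0 ≤ ∏ i, matrixSpectralNorm (A i) :=
    prod_nonneg fun i _ ↦ matrixSpectralNorm_nonneg _
  by_cases hdim : ∀ i, Nonempty (Fin (m i)) ∧ Nonempty (Fin (n i))
  · have (i : Fin N) : Nonempty (Fin (m i)) := (hdim i).1
    have (i : Fin N) : Nonempty (Fin (n i)) := (hdim i).2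
    have hsub := smul_rayleighSet_subset_rayleighSet_matrixComposition B A
    exact ⟨lamMax_mul_le_of_smul_subset hP hsub,
      matrixSpectralNorm_mul_le_of_smul_subset hB hP hsub⟩
  · simp only [not_forall, not_and_or, not_nonempty_iff] at hdim
    obtain ⟨i, hi⟩ := hdim
    have hP0 : ∏ i, matrixSpectralNorm (A i) = 0 :=
      prod_eq_zero (mem_univ i) (matrixSpectralNorm_eq_zero_of_isEmpty _ hi)
    rw [hP0, mul_zero, mul_zero]
    exact ⟨lamMax_nonneg_of_forall_diag_nonneg fun a ↦ by simp [matrixComposition_apply_self, hP0],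
      matrixSpectralNorm_nonneg _⟩
end

section
/- With the composition setup, ‖C‖ = ‖B‖ · ∏_{i=1}^N ‖A_i‖ exactly, where C is the matrix composition of the symmetric matrix B with A_1,…,A_N. -/
open Matrix

/-!
Write `τ a` for the pattern of sides (`inl`/`inr`) of a multi-index `a`, `H = ⊗ᵢ Âᵢ` and
`c = ∏ᵢ ‖Aᵢ‖`, so that `C = B[τ, τ] ⊙ H`. Each `Âᵢ` is positive semidefinite, `Âᵢ = Fᵢᵀ Fᵢ`, and
on pairs of multi-indices with the same side pattern `H` agrees with `c • 1`. Hence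
`C = P (B ⊗ 1) Pᵀ` with `P Pᵀ = c • 1`, which gives `‖C‖ ≤ c ‖B‖`.

Conversely, pick unit vectors with `uᵢᵀ Aᵢ vᵢ = ‖Aᵢ‖`. The two orthonormal rows `(uᵢ, 0)`, `(0, vᵢ)`
satisfy `xᵀ Âᵢ y = ‖Aᵢ‖` for every choice of rows `x`, `y`; their tensor product is a matrix `Z`
with orthonormal rows, supported on matching side patterns, and `Z C Zᵀ = c • B`. So
`c ‖B‖ ≤ ‖C‖`.
-/

open scoped Matrix.Norms.L2Operator

theorem ContinuousLinearMap.exists_norm_eq_one_norm_apply_eq_opNorm {E F : Type*}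
    [NormedAddCommGroup E] [NormedSpace ℝ E] [ProperSpace E] [Nontrivial E]
    [NormedAddCommGroup F] [NormedSpace ℝ F] (f : E →L[ℝ] F) :
    ∃ x, ‖x‖ = 1 ∧ ‖f x‖ = ‖f‖ := by
  have hK : IsCompact ((fun x => ‖f x‖) '' Metric.sphere 0 1) :=
    (isCompact_sphere 0 1).image (by fun_prop)
  obtain ⟨x, hx, hfx⟩ := hK.sSup_mem ((NormedSpace.sphere_nonempty.mpr zero_le_one).image _)
  exact ⟨x, mem_sphere_zero_iff_norm.mp hx, hfx.trans f.sSup_sphere_eq_norm⟩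

theorem EuclideanSpace.norm_toLp_sq {n : Type*} [Fintype n] (x : n → ℝ) :
    ‖WithLp.toLp 2 x‖ ^ 2 = x ⬝ᵥ x := by
  rw [← real_inner_self_eq_norm_sq, EuclideanSpace.inner_toLp_toLp, star_trivial]

namespace Matrix

section L2OpNorm

variable {m n o : Type*} [Fintype n] [Fintype o]

theorem blockDiagonal_mulVec_apply [DecidableEq o] (M : o → Matrix m n ℝ) (x : n × o → ℝ)
    (p : m) (k : o) : (blockDiagonal M *ᵥ x) (p, k) = (M k *ᵥ fun q => x (q, k)) p := by
  simp [mulVec, dotProduct, blockDiagonal_apply, Fintype.sum_prod_type_right]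

variable [Fintype m] [DecidableEq n]

theorem l2_opNorm_le_of_forall_dotProduct (M : Matrix m n ℝ) {c : ℝ} (hc : 0 ≤ c)
    (h : ∀ x, (M *ᵥ x) ⬝ᵥ (M *ᵥ x) ≤ c ^ 2 * (x ⬝ᵥ x)) : ‖M‖ ≤ c := by
  refine ContinuousLinearMap.opNorm_le_bound _ hc fun x => ?_
  rw [← sq_le_sq₀ (norm_nonneg _) (by positivity), mul_pow]
  have hx := h x.ofLp
  rwa [← EuclideanSpace.norm_toLp_sq, ← EuclideanSpace.norm_toLp_sq, WithLp.toLp_ofLp]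
    at hx

theorem dotProduct_self_mulVec_le (M : Matrix m n ℝ) (x : n → ℝ) :
    (M *ᵥ x) ⬝ᵥ (M *ᵥ x) ≤ ‖M‖ ^ 2 * (x ⬝ᵥ x) := by
  rw [← EuclideanSpace.norm_toLp_sq, ← EuclideanSpace.norm_toLp_sq, ← mul_pow]
  gcongr
  exact M.l2_opNorm_mulVec (WithLp.toLp 2 x)

theorem abs_dotProduct_mulVec_le (M : Matrix m n ℝ) (x : m → ℝ) (y : n → ℝ) :
    |x ⬝ᵥ (M *ᵥ y)| ≤ ‖M‖ * ‖WithLp.toLp 2 y‖ * ‖WithLp.toLp 2 x‖ := by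
  calc |x ⬝ᵥ (M *ᵥ y)| = |inner ℝ (WithLp.toLp 2 (M *ᵥ y)) (WithLp.toLp 2 x)| := by
        rw [EuclideanSpace.inner_toLp_toLp, star_trivial]
    _ ≤ ‖WithLp.toLp 2 (M *ᵥ y)‖ * ‖WithLp.toLp 2 x‖ := abs_real_inner_le_norm _ _
    _ ≤ ‖M‖ * ‖WithLp.toLp 2 y‖ * ‖WithLp.toLp 2 x‖ := by
        gcongr; exact M.l2_opNorm_mulVec _

theorem exists_dotProduct_mulVec_eq_l2_opNorm (M : Matrix m n ℝ) (hM : 0 < ‖M‖) :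
    ∃ (x : m → ℝ) (y : n → ℝ), x ⬝ᵥ x = 1 ∧ y ⬝ᵥ y = 1 ∧ x ⬝ᵥ (M *ᵥ y) = ‖M‖ := by
  set f := (toEuclideanLin.trans LinearMap.toContinuousLinearMap) M
  have : Nontrivial (EuclideanSpace ℝ n) := by
    by_contra h
    rw [not_nontrivial_iff_subsingleton] at h
    exact hM.ne' f.opNorm_subsingleton
  obtain ⟨y, hy, hfy⟩ := f.exists_norm_eq_one_norm_apply_eq_opNorm
  have hMy : (M *ᵥ y.ofLp) ⬝ᵥ (M *ᵥ y.ofLp) = ‖M‖ ^ 2 := by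
    rw [← EuclideanSpace.norm_toLp_sq]; exact congrArg (· ^ 2) hfy
  refine ⟨‖M‖⁻¹ • (M *ᵥ y.ofLp), y.ofLp, ?_, ?_, ?_⟩
  · rw [smul_dotProduct, dotProduct_smul, hMy, smul_eq_mul, smul_eq_mul]
    field_simp
  · rw [← EuclideanSpace.norm_toLp_sq, WithLp.toLp_ofLp, hy, one_pow]
  · rw [smul_dotProduct, hMy, smul_eq_mul]
    field_simp

theorem l2_opNorm_transpose [DecidableEq m] (M : Matrix m n ℝ) : ‖Mᵀ‖ = ‖M‖ := by
  rw [← conjTranspose_eq_transpose_of_trivial, l2_opNorm_conjTranspose]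

theorem l2_opNorm_mul_transpose_self [DecidableEq m] (M : Matrix m n ℝ) :
    ‖M * Mᵀ‖ = ‖M‖ ^ 2 := by
  rw [sq, ← l2_opNorm_transpose M, ← l2_opNorm_conjTranspose_mul_self,
    conjTranspose_eq_transpose_of_trivial, transpose_transpose]

theorem l2_opNorm_mul_mul_transpose_le [DecidableEq m] (P : Matrix m n ℝ) (M : Matrix n n ℝ) :
    ‖P * M * Pᵀ‖ ≤ ‖P * Pᵀ‖ * ‖M‖ := by
  calc ‖P * M * Pᵀ‖ ≤ ‖P‖ * ‖M‖ * ‖Pᵀ‖ := by grw [l2_opNorm_mul, l2_opNorm_mul]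
    _ = ‖P * Pᵀ‖ * ‖M‖ := by rw [l2_opNorm_transpose, l2_opNorm_mul_transpose_self]; ring

theorem l2_opNorm_one_le : ‖(1 : Matrix n n ℝ)‖ ≤ 1 := by
  rw [← diagonal_one, l2_opNorm_diagonal]
  exact (pi_norm_const_le (1 : ℝ)).trans norm_one.le

theorem l2_opNorm_blockDiagonal_le [DecidableEq o] (M : o → Matrix m n ℝ) {c : ℝ} (hc : 0 ≤ c)
    (hM : ∀ k, ‖M k‖ ≤ c) : ‖blockDiagonal M‖ ≤ c := by
  refine l2_opNorm_le_of_forall_dotProduct _ hc fun x => ?_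
  simp only [dotProduct, Fintype.sum_prod_type_right, blockDiagonal_mulVec_apply]
  rw [Finset.mul_sum]
  refine Finset.sum_le_sum fun k _ => ?_
  calc _ ≤ ‖M k‖ ^ 2 * ∑ q, x (q, k) * x (q, k) := dotProduct_self_mulVec_le (M k) _
    _ ≤ _ := by gcongr; exacts [Finset.sum_nonneg fun _ _ => mul_self_nonneg _, hM k]

end L2OpNorm

section PiKronecker

variable {ι R : Type*} [Fintype ι] [CommSemiring R] {S T U : ι → Type*}

def piKronecker (M : ∀ i, Matrix (S i) (T i) R) : Matrix (∀ i, S i) (∀ i, T i) R :=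
  of fun a b => ∏ i, M i (a i) (b i)

@[simp]
theorem piKronecker_apply (M : ∀ i, Matrix (S i) (T i) R) (a : ∀ i, S i) (b : ∀ i, T i) :
    piKronecker M a b = ∏ i, M i (a i) (b i) := rfl

theorem piKronecker_transpose (M : ∀ i, Matrix (S i) (T i) R) :
    (piKronecker M)ᵀ = piKronecker fun i => (M i)ᵀ := rfl

theorem piKronecker_one [∀ i, DecidableEq (S i)] :
    piKronecker (fun i => (1 : Matrix (S i) (S i) R)) = 1 := by
  ext a b
  simp only [piKronecker_apply, one_apply, Finset.prod_ite_zero, Finset.prod_const_one,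
    Finset.mem_univ, forall_const, funext_iff]

variable [DecidableEq ι]

theorem piKronecker_mul [∀ i, Fintype (T i)] (M : ∀ i, Matrix (S i) (T i) R)
    (M' : ∀ i, Matrix (T i) (U i) R) :
    piKronecker M * piKronecker M' = piKronecker fun i => M i * M' i := by
  ext a c
  simp only [mul_apply, piKronecker_apply, ← Finset.prod_mul_distrib, Fintype.prod_sum]

end PiKronecker

section SubmatrixHadamard

variable {I J T : Type*}

def hadamardFactor [DecidableEq J] (τ : I → J) (G : Matrix T I ℝ) : Matrix I (J × T) ℝ :=
  of fun a x => if τ a = x.1 then G x.2 a else 0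

theorem submatrix_hadamard_transpose_mul [Fintype J] [Fintype T] [DecidableEq J] [DecidableEq T]
    (B : Matrix J J ℝ) (τ : I → J) (G : Matrix T I ℝ) :
    B.submatrix τ τ ⊙ (Gᵀ * G) =
      hadamardFactor τ G * blockDiagonal (fun _ : T => B) * (hadamardFactor τ G)ᵀ := by
  ext a b
  simp only [hadamard_apply, submatrix_apply, mul_apply, transpose_apply, Finset.mul_sum,
    hadamardFactor, of_apply, blockDiagonal_apply, mul_ite, ite_mul, zero_mul, mul_zero,
    Fintype.sum_prod_type, Finset.sum_ite_eq', Finset.mem_univ, ↓reduceIte, Finset.sum_ite_eq,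
    Finset.sum_ite_irrel, Finset.sum_const_zero]
  exact Finset.sum_congr rfl fun _ _ => by ring

theorem hadamardFactor_mul_transpose [Fintype J] [Fintype T] [DecidableEq I] [DecidableEq J]
    [DecidableEq T] (τ : I → J) (G : Matrix T I ℝ) {c : ℝ}
    (hG : ∀ a b, τ a = τ b → (Gᵀ * G) a b = if a = b then c else 0) :
    hadamardFactor τ G * (hadamardFactor τ G)ᵀ = c • 1 := by
  have h := submatrix_hadamard_transpose_mul (1 : Matrix J J ℝ) τ G
  rw [show blockDiagonal (fun _ : T => (1 : Matrix J J ℝ)) = 1 from blockDiagonal_one,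
    Matrix.mul_one] at h
  rw [← h]
  ext a b
  by_cases hab : τ a = τ b
  · simp [hab, hG a b hab, one_apply]
  · simp [hab, ne_of_apply_ne τ hab]

theorem l2_opNorm_submatrix_hadamard_le [Fintype I] [Fintype J] [Fintype T] [DecidableEq I]
    [DecidableEq J] [DecidableEq T] (B : Matrix J J ℝ) (τ : I → J) (G : Matrix T I ℝ)
    {c : ℝ} (hc : 0 ≤ c) (hG : ∀ a b, τ a = τ b → (Gᵀ * G) a b = if a = b then c else 0) :
    ‖B.submatrix τ τ ⊙ (Gᵀ * G)‖ ≤ ‖B‖ * c := by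
  rw [submatrix_hadamard_transpose_mul]
  grw [l2_opNorm_mul_mul_transpose_le, hadamardFactor_mul_transpose τ G hG, norm_smul,
    l2_opNorm_one_le, l2_opNorm_blockDiagonal_le _ (norm_nonneg B) fun _ => le_rfl,
    Real.norm_of_nonneg hc, mul_one, mul_comm]

theorem mul_submatrix_hadamard_mul_transpose [Fintype I] [DecidableEq J] (B : Matrix J J ℝ)
    (τ : I → J) (H : Matrix I I ℝ) (Z : Matrix J I ℝ) (hZ : ∀ p a, τ a ≠ p → Z p a = 0) :
    Z * (B.submatrix τ τ ⊙ H) * Zᵀ = B ⊙ (Z * H * Zᵀ) := by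
  have hterm : ∀ p q a b, Z p a * (B (τ a) (τ b) * H a b) * Z q b =
      B p q * (Z p a * H a b * Z q b) := by
    intro p q a b
    by_cases ha : τ a = p
    · by_cases hb : τ b = q
      · rw [ha, hb]; ring
      · rw [hZ q b hb]; ring
    · rw [hZ p a ha]; ring
  ext p q
  simp only [mul_apply, hadamard_apply, submatrix_apply, transpose_apply, Finset.sum_mul,
    Finset.mul_sum, hterm]

theorem l2_opNorm_smul_le_submatrix_hadamard [Fintype I] [Fintype J] [DecidableEq I]
    [DecidableEq J] (B : Matrix J J ℝ) (τ : I → J) (H : Matrix I I ℝ)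
    (Z : Matrix J I ℝ) {c : ℝ} (hZ : ∀ p a, τ a ≠ p → Z p a = 0) (hZZ : Z * Zᵀ = 1)
    (hZH : ∀ p q, (Z * H * Zᵀ) p q = c) :
    ‖c • B‖ ≤ ‖B.submatrix τ τ ⊙ H‖ := by
  have hcB : c • B = Z * (B.submatrix τ τ ⊙ H) * Zᵀ := by
    rw [mul_submatrix_hadamard_mul_transpose B τ H Z hZ]
    ext p q
    rw [hadamard_apply, hZH, smul_apply, smul_eq_mul, mul_comm]
  grw [hcB, l2_opNorm_mul_mul_transpose_le, hZZ, l2_opNorm_one_le, one_mul]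

end SubmatrixHadamard

end Matrix

theorem matrixSpectralNorm_eq_l2_opNorm {m n : Type*} [Fintype m] [Fintype n] [DecidableEq n]
    (M : Matrix m n ℝ) : matrixSpectralNorm M = ‖M‖ := rfl

section HatMatrix

variable {m n : ℕ} (A : Matrix (Fin m) (Fin n) ℝ)

theorem hatMatrix_apply_of_isRight_eq {s t : Fin m ⊕ Fin n} (h : s.isRight = t.isRight) :
    hatMatrix A s t = if s = t then ‖A‖ else 0 := by
  cases s <;> cases t <;> simp_all [hatMatrix, one_apply, matrixSpectralNorm_eq_l2_opNorm]

theorem sumElim_dotProduct_hatMatrix_mulVec (p p' : Fin m → ℝ) (q q' : Fin n → ℝ) :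
    Sum.elim p q ⬝ᵥ (hatMatrix A *ᵥ Sum.elim p' q') =
      ‖A‖ * (p ⬝ᵥ p' + q ⬝ᵥ q') + p ⬝ᵥ (A *ᵥ q') + p' ⬝ᵥ (A *ᵥ q) := by
  have hq : q ⬝ᵥ (Aᵀ *ᵥ p') = p' ⬝ᵥ (A *ᵥ q) := by
    rw [mulVec_transpose, dotProduct_comm, dotProduct_mulVec]
  rw [hatMatrix, fromBlocks_mulVec, sumElim_dotProduct_sumElim]
  simp only [Sum.elim_comp_inl, Sum.elim_comp_inr, smul_mulVec, one_mulVec, dotProduct_add,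
    dotProduct_smul, smul_eq_mul, hq, matrixSpectralNorm_eq_l2_opNorm]
  ring

theorem hatMatrix_posSemidef : (hatMatrix A).PosSemidef := by
  refine posSemidef_iff_dotProduct_mulVec.mpr ⟨?_, fun x => ?_⟩
  · refine IsHermitian.fromBlocks ?_ (conjTranspose_eq_transpose_of_trivial A) ?_ <;>
      simp [IsHermitian]
  rw [star_trivial, ← Sum.elim_comp_inl_inr x, sumElim_dotProduct_hatMatrix_mulVec,
    ← EuclideanSpace.norm_toLp_sq (x ∘ Sum.inl), ← EuclideanSpace.norm_toLp_sq (x ∘ Sum.inr)]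
  have hcross := abs_le.mp (abs_dotProduct_mulVec_le A (x ∘ Sum.inl) (x ∘ Sum.inr))
  have hsq : 0 ≤ ‖A‖ * (‖WithLp.toLp 2 (x ∘ Sum.inl)‖ - ‖WithLp.toLp 2 (x ∘ Sum.inr)‖) ^ 2 :=
    mul_nonneg (norm_nonneg A) (sq_nonneg _)
  nlinarith [hcross.1]

theorem exists_transpose_mul_eq_hatMatrix : ∃ F, hatMatrix A = Fᵀ * F := by
  open scoped MatrixOrder in
  obtain ⟨F, hF⟩ := CStarAlgebra.nonneg_iff_eq_star_mul_self.mp (hatMatrix_posSemidef A).nonneg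
  exact ⟨F, by rwa [star_eq_conjTranspose, conjTranspose_eq_transpose_of_trivial] at hF⟩

def hatFrame (u : Fin m → ℝ) (v : Fin n → ℝ) : Matrix Bool (Fin m ⊕ Fin n) ℝ :=
  of fun b => bif b then Sum.elim 0 v else Sum.elim u 0

variable {u : Fin m → ℝ} {v : Fin n → ℝ}

@[simp]
theorem hatFrame_false : hatFrame u v false = Sum.elim u 0 := rfl

@[simp]
theorem hatFrame_true : hatFrame u v true = Sum.elim (0 : Fin m → ℝ) v := rfl

theorem hatFrame_apply_eq_zero {b : Bool} {s : Fin m ⊕ Fin n} (h : s.isRight ≠ b) :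
    hatFrame u v b s = 0 := by
  cases b <;> cases s <;> simp_all

theorem hatFrame_mul_transpose (hu : u ⬝ᵥ u = 1) (hv : v ⬝ᵥ v = 1) :
    hatFrame u v * (hatFrame u v)ᵀ = 1 := by
  ext b b'
  change hatFrame u v b ⬝ᵥ hatFrame u v b' = _
  cases b <;> cases b' <;> simp [sumElim_dotProduct_sumElim, hu, hv]

theorem hatFrame_mul_hatMatrix_mul_transpose (hu : u ⬝ᵥ u = 1) (hv : v ⬝ᵥ v = 1)
    (huv : u ⬝ᵥ (A *ᵥ v) = ‖A‖) (b b' : Bool) :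
    (hatFrame u v * hatMatrix A * (hatFrame u v)ᵀ) b b' = ‖A‖ := by
  rw [Matrix.mul_assoc, mul_apply]
  change hatFrame u v b ⬝ᵥ (hatMatrix A *ᵥ hatFrame u v b') = _
  cases b <;> cases b' <;> simp [sumElim_dotProduct_hatMatrix_mulVec, hu, hv, huv]

end HatMatrix

section MatrixComposition

variable {N : ℕ} {m n : Fin N → ℕ} (B : Matrix (Fin N → Bool) (Fin N → Bool) ℝ)
  (A : ∀ i, Matrix (Fin (m i)) (Fin (n i)) ℝ)

theorem matrixComposition_eq_submatrix_hadamard :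
    matrixComposition B A =
      B.submatrix (fun a i => (a i).isRight) (fun a i => (a i).isRight) ⊙
        piKronecker fun i => hatMatrix (A i) := rfl

theorem l2_opNorm_matrixComposition_le : ‖matrixComposition B A‖ ≤ ‖B‖ * ∏ i, ‖A i‖ := by
  choose F hF using fun i => exists_transpose_mul_eq_hatMatrix (A i)
  have hH : piKronecker (fun i => hatMatrix (A i)) = (piKronecker F)ᵀ * piKronecker F := by
    rw [piKronecker_transpose, piKronecker_mul]
    exact congrArg piKronecker (funext hF)
  rw [matrixComposition_eq_submatrix_hadamard, hH]
  refine l2_opNorm_submatrix_hadamard_le _ _ _ (Finset.prod_nonneg fun i _ => norm_nonneg _)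
    fun a b hab => ?_
  rw [← hH, piKronecker_apply]
  simp only [hatMatrix_apply_of_isRight_eq _ (congrFun hab _), Finset.prod_ite_zero,
    Finset.mem_univ, forall_const, funext_iff]

theorem le_l2_opNorm_matrixComposition : ‖B‖ * ∏ i, ‖A i‖ ≤ ‖matrixComposition B A‖ := by
  by_cases hA : ∀ i, 0 < ‖A i‖
  swap
  · obtain ⟨i, hi⟩ := not_forall.mp hA
    rw [Finset.prod_eq_zero (Finset.mem_univ i) (le_antisymm (not_lt.mp hi) (norm_nonneg (A i))),
      mul_zero]
    exact norm_nonneg _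
  choose u v hu hv huv using fun i => exists_dotProduct_mulVec_eq_l2_opNorm (A i) (hA i)
  have key := l2_opNorm_smul_le_submatrix_hadamard B (fun a i => (a i).isRight)
    (piKronecker fun i => hatMatrix (A i)) (piKronecker fun i => hatFrame (u i) (v i))
    (c := ∏ i, ‖A i‖) ?supp ?orth ?entries
  case supp =>
    intro p a hpa
    obtain ⟨i, hi⟩ := Function.ne_iff.mp hpa
    exact Finset.prod_eq_zero (Finset.mem_univ i) (hatFrame_apply_eq_zero hi)
  case orth =>
    rw [piKronecker_transpose, piKronecker_mul]
    simp_rw [hatFrame_mul_transpose (hu _) (hv _)]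
    exact piKronecker_one
  case entries =>
    intro p q
    rw [piKronecker_transpose, piKronecker_mul, piKronecker_mul, piKronecker_apply]
    exact Finset.prod_congr rfl fun i _ =>
      hatFrame_mul_hatMatrix_mul_transpose (A i) (hu i) (hv i) (huv i) _ _
  rwa [norm_smul, Real.norm_of_nonneg (Finset.prod_nonneg fun i _ => norm_nonneg _),
    mul_comm] at key

end MatrixComposition

theorem stmt9_general {N : ℕ} {m n : Fin N → ℕ}
    (B : Matrix (Fin N → Bool) (Fin N → Bool) ℝ)
    (A : ∀ i, Matrix (Fin (m i)) (Fin (n i)) ℝ) :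
    matrixSpectralNorm (matrixComposition B A) = matrixSpectralNorm B * ∏ i, matrixSpectralNorm (A i) :=
  le_antisymm (l2_opNorm_matrixComposition_le B A) (le_l2_opNorm_matrixComposition B A)

/-- For the matrix composition `C` of a symmetric matrix `B` with `A_1, …, A_N`:
`‖C‖ = ‖B‖ · ∏ i ‖A_i‖` exactly. -/
theorem stmt9 {N : ℕ} {m n : Fin N → ℕ}
    (B : Matrix (Fin N → Bool) (Fin N → Bool) ℝ) (hB : B.IsSymm)
    (A : ∀ i, Matrix (Fin (m i)) (Fin (n i)) ℝ) :
    matrixSpectralNorm (matrixComposition B A) = matrixSpectralNorm B * ∏ i, matrixSpectralNorm (A i) :=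
  stmt9_general B A
end
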